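/- arXiv:2203.12491 — 3 statements merged into one kernel-verified Lean document; each statement's English description precedes it below -/
import Mathlib

section
/- Let X : Fin n₁ × Fin n₂ → ℝ be an order-2 tensor (matrix), and Π₁ ∈ ℝ^{n₁×n₁}, Π₂ ∈ ℝ^{n₂×n₂} orthogonal projections. Then ‖X - Π₁ X Π₂ᵀ‖_F² ≤ ‖X - Π₁ X‖_F² + ‖X - X Π₂ᵀ‖_F². (This is the d = 2 case of Saibaba's Lemma 2.1 for mode-wise projections.) -/
/-! Split `X - Π₁XΠ₂ᵀ = (X - Π₁X) + Π₁(X - XΠ₂ᵀ)`. The two summands are orthogonal for the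
Frobenius inner product because `Π₁` is an orthogonal projection, so the squared norm is
`‖X - Π₁X‖² + ‖Π₁(X - XΠ₂ᵀ)‖²`, and `Π₁` does not increase the Frobenius norm. -/

open Matrix

/-- Frobenius norm of a real matrix. -/
noncomputable def frobNorm {α β : Type*} [Fintype α] [Fintype β]
    (A : Matrix α β ℝ) : ℝ := Real.sqrt (∑ i, ∑ j, (A i j) ^ 2)

/-- Squared Frobenius norm of a real matrix. -/
noncomputable def frobSq {α β : Type*} [Fintype α] [Fintype β]
    (A : Matrix α β ℝ) : ℝ := ∑ i, ∑ j, (A i j) ^ 2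

/-- Spectral norm (largest singular value) of a real matrix: the operator norm
of the induced linear map between Euclidean spaces. -/
noncomputable def specNorm {α β : Type*} [Fintype α] [Fintype β] [DecidableEq α] [DecidableEq β]
    (A : Matrix α β ℝ) : ℝ :=
  ‖LinearMap.toContinuousLinearMap (Matrix.toEuclideanLin A)‖

/-- Moore–Penrose pseudoinverse of a full-column-rank matrix: `C⁺ = (CᵀC)⁻¹Cᵀ`. -/
noncomputable def pinv {m k : ℕ} (C : Matrix (Fin m) (Fin k) ℝ) : Matrix (Fin k) (Fin m) ℝ :=
  (Cᵀ * C)⁻¹ * Cᵀ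

/-- Mode-1 product of an order-3 tensor with a matrix. -/
def mode1 {n₁ n₂ n₃ m : ℕ} (U : Matrix (Fin m) (Fin n₁) ℝ)
    (X : Fin n₁ × Fin n₂ × Fin n₃ → ℝ) : Fin m × Fin n₂ × Fin n₃ → ℝ :=
  fun p => ∑ j, U p.1 j * X (j, p.2.1, p.2.2)

/-- Mode-2 product of an order-3 tensor with a matrix. -/
def mode2 {n₁ n₂ n₃ m : ℕ} (V : Matrix (Fin m) (Fin n₂) ℝ)
    (X : Fin n₁ × Fin n₂ × Fin n₃ → ℝ) : Fin n₁ × Fin m × Fin n₃ → ℝ :=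
  fun p => ∑ k, V p.2.1 k * X (p.1, k, p.2.2)

/-- Mode-3 product of an order-3 tensor with a matrix. -/
def mode3 {n₁ n₂ n₃ m : ℕ} (W : Matrix (Fin m) (Fin n₃) ℝ)
    (X : Fin n₁ × Fin n₂ × Fin n₃ → ℝ) : Fin n₁ × Fin n₂ × Fin m → ℝ :=
  fun p => ∑ l, W p.2.2 l * X (p.1, p.2.1, l)

/-- Mode-1 unfolding of an order-3 tensor. -/
def unfold1 {n₁ n₂ n₃ : ℕ} (X : Fin n₁ × Fin n₂ × Fin n₃ → ℝ) :
    Matrix (Fin n₁) (Fin n₂ × Fin n₃) ℝ := Matrix.of fun j p => X (j, p.1, p.2)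

/-- Mode-2 unfolding of an order-3 tensor. -/
def unfold2 {n₁ n₂ n₃ : ℕ} (X : Fin n₁ × Fin n₂ × Fin n₃ → ℝ) :
    Matrix (Fin n₂) (Fin n₁ × Fin n₃) ℝ := Matrix.of fun k p => X (p.1, k, p.2)

/-- Mode-3 unfolding of an order-3 tensor. -/
def unfold3 {n₁ n₂ n₃ : ℕ} (X : Fin n₁ × Fin n₂ × Fin n₃ → ℝ) :
    Matrix (Fin n₃) (Fin n₁ × Fin n₂) ℝ := Matrix.of fun l p => X (p.1, p.2, l)

/-- Frobenius norm of an order-3 tensor. -/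
noncomputable def tnorm {n₁ n₂ n₃ : ℕ} (X : Fin n₁ × Fin n₂ × Fin n₃ → ℝ) : ℝ :=
  Real.sqrt (∑ p, (X p) ^ 2)

/-- Squared Frobenius norm of an order-3 tensor. -/
noncomputable def tSq {n₁ n₂ n₃ : ℕ} (X : Fin n₁ × Fin n₂ × Fin n₃ → ℝ) : ℝ :=
  ∑ p, (X p) ^ 2

section FrobeniusPythagoras

variable {α β : Type*} [Fintype α] [Fintype β]

lemma frobSq_eq_trace_transpose_mul (A : Matrix α β ℝ) : frobSq A = (Aᵀ * A).trace := by
  simp only [frobSq, Matrix.trace, Matrix.diag, Matrix.mul_apply, Matrix.transpose_apply, sq]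
  exact Finset.sum_comm

lemma frobSq_nonneg (A : Matrix α β ℝ) : 0 ≤ frobSq A :=
  Finset.sum_nonneg fun _ _ => Finset.sum_nonneg fun _ _ => sq_nonneg _

lemma frobSq_add_of_transpose_mul_eq_zero {B C : Matrix α β ℝ} (h : Bᵀ * C = 0) :
    frobSq (B + C) = frobSq B + frobSq C := by
  have h' : Cᵀ * B = 0 := by simpa [Matrix.transpose_mul] using congrArg Matrix.transpose h
  simp only [frobSq_eq_trace_transpose_mul, Matrix.transpose_add, Matrix.add_mul, Matrix.mul_add,
    h, h', add_zero, zero_add, Matrix.trace_add]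

end FrobeniusPythagoras

section OrthogonalProjection

variable {α β γ : Type*} [Fintype α] {P : Matrix α α ℝ} (hsym : Pᵀ = P) (hidem : P * P = P)
include hsym hidem

lemma transpose_sub_mul_mul_mul_eq_zero (A : Matrix α β ℝ) (B : Matrix α γ ℝ) :
    (A - P * A)ᵀ * (P * B) = 0 := by
  rw [Matrix.transpose_sub, Matrix.transpose_mul, hsym, Matrix.sub_mul, Matrix.mul_assoc,
    ← Matrix.mul_assoc P, hidem, sub_self]

lemma frobSq_sub_mul_add_mul [Fintype β] (A B : Matrix α β ℝ) :
    frobSq (A - P * A + P * B) = frobSq (A - P * A) + frobSq (P * B) :=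
  frobSq_add_of_transpose_mul_eq_zero (transpose_sub_mul_mul_mul_eq_zero hsym hidem A B)

lemma frobSq_mul_le [Fintype β] (B : Matrix α β ℝ) : frobSq (P * B) ≤ frobSq B := by
  have hsplit := frobSq_sub_mul_add_mul hsym hidem B B
  rw [sub_add_cancel] at hsplit
  linarith [frobSq_nonneg (B - P * B)]

end OrthogonalProjection

theorem stmt5_general {n₁ n₂ : ℕ} (X : Matrix (Fin n₁) (Fin n₂) ℝ)
    (Pi1 : Matrix (Fin n₁) (Fin n₁) ℝ) (Pi2 : Matrix (Fin n₂) (Fin n₂) ℝ)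
    (h1idem : Pi1 * Pi1 = Pi1) (h1sym : Pi1ᵀ = Pi1) :
    frobSq (X - Pi1 * X * Pi2ᵀ) ≤ frobSq (X - Pi1 * X) + frobSq (X - X * Pi2ᵀ) := by
  have hsplit : X - Pi1 * X * Pi2ᵀ = X - Pi1 * X + Pi1 * (X - X * Pi2ᵀ) := by
    rw [Matrix.mul_sub, Matrix.mul_assoc]; abel
  rw [hsplit, frobSq_sub_mul_add_mul h1sym h1idem]
  linarith [frobSq_mul_le h1sym h1idem (X - X * Pi2ᵀ)]

theorem stmt5 {n₁ n₂ : ℕ} (X : Matrix (Fin n₁) (Fin n₂) ℝ)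
    (Pi1 : Matrix (Fin n₁) (Fin n₁) ℝ) (Pi2 : Matrix (Fin n₂) (Fin n₂) ℝ)
    (h1idem : Pi1 * Pi1 = Pi1) (h1sym : Pi1ᵀ = Pi1)
    (h2idem : Pi2 * Pi2 = Pi2) (h2sym : Pi2ᵀ = Pi2) :
    frobSq (X - Pi1 * X * Pi2ᵀ) ≤ frobSq (X - Pi1 * X) + frobSq (X - X * Pi2ᵀ) :=
  stmt5_general X Pi1 Pi2 h1idem h1sym
end

section
/- Let Π₁, Π₂, Π₃ be orthogonal projections. For an order-3 tensor X ∈ ℝ^{n₁×n₂×n₃}, define (X ×ᵢ Πᵢ) as multiplication of Πᵢ along mode i. Then ‖X - X ×₁ Π₁ ×₂ Π₂ ×₃ Π₃‖_F² ≤ ∑_{i=1}^{3} ‖X - X ×ᵢ Πᵢ‖_F². -/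
/-!
Vectorize tensors as points of `EuclideanSpace ℝ (Fin n₁ × Fin n₂ × Fin n₃)`. Mode-`i`
multiplication by `Πᵢ` is then the Kronecker product of `Πᵢ` with identities, so the three
operators `p, q, r` commute and `p, q` are orthogonal projections. The telescoping identity
`1 - rqp = (1 - p) + p (1 - q) + pq (1 - r)` splits `X - rqp X` into three pairwise orthogonal
pieces, and Pythagoras together with `‖p y‖ ≤ ‖y‖`, `‖pq y‖ ≤ ‖y‖` bounds each piece by the
corresponding single-mode error.
-/

open Matrix

open scoped InnerProductSpace Kronecker

theorem norm_add_add_sq_of_inner_eq_zero {𝕜 E : Type*} [RCLike 𝕜] [NormedAddCommGroup E]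
    [InnerProductSpace 𝕜 E] {a b c : E} (hab : ⟪a, b⟫_𝕜 = 0) (hac : ⟪a, c⟫_𝕜 = 0)
    (hbc : ⟪b, c⟫_𝕜 = 0) : ‖a + b + c‖ ^ 2 = ‖a‖ ^ 2 + ‖b‖ ^ 2 + ‖c‖ ^ 2 := by
  have habc : ⟪a + b, c⟫_𝕜 = 0 := by rw [inner_add_left, hac, hbc, add_zero]
  simp only [sq, norm_add_sq_eq_norm_sq_add_norm_sq_of_inner_eq_zero _ _ habc,
    norm_add_sq_eq_norm_sq_add_norm_sq_of_inner_eq_zero _ _ hab]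

section StarProjection

variable {𝕜 E : Type*} [RCLike 𝕜] [NormedAddCommGroup E] [InnerProductSpace 𝕜 E]
  [CompleteSpace E]

namespace IsStarProjection

variable {p : E →L[𝕜] E} (hp : IsStarProjection p)
include hp

theorem inner_apply_left (x y : E) : ⟪p x, y⟫_𝕜 = ⟪x, p y⟫_𝕜 :=
  hp.isSelfAdjoint.isSymmetric x y

theorem apply_apply (x : E) : p (p x) = p x :=
  congr($(hp.isIdempotentElem.eq) x)

theorem inner_sub_apply_self_apply (x y : E) : ⟪x - p x, p y⟫_𝕜 = 0 := by
  rw [← hp.inner_apply_left, map_sub, hp.apply_apply, sub_self, inner_zero_left]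

theorem norm_apply_le (x : E) : ‖p x‖ ≤ ‖x‖ :=
  (p.le_opNorm x).trans (mul_le_of_le_one_left (norm_nonneg x) (hp.norm_le p))

end IsStarProjection

theorem norm_sub_apply_apply_apply_sq_le {p q r : E →L[𝕜] E} (hp : IsStarProjection p)
    (hq : IsStarProjection q) (hpq : Commute p q) (hpr : Commute p r) (hqr : Commute q r)
    (x : E) : ‖x - r (q (p x))‖ ^ 2 ≤ ‖x - p x‖ ^ 2 + ‖x - q x‖ ^ 2 + ‖x - r x‖ ^ 2 := by
  have hrqp : r (q (p x)) = p (q (r x)) := by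
    have h : r * q * p = p * q * r := by
      rw [mul_assoc, ← hpq.eq, ← mul_assoc, ← hpr.eq, mul_assoc, ← hqr.eq, mul_assoc]
    exact congr($h x)
  have hsplit : x - r (q (p x)) = (x - p x) + p (x - q x) + p (q (x - r x)) := by
    rw [hrqp]
    simp only [map_sub]
    abel
  have hbc : ⟪p (x - q x), p (q (x - r x))⟫_𝕜 = 0 := by
    rw [hp.inner_apply_left, hp.apply_apply, ← mul_apply_eq_comp, hpq.eq, mul_apply_eq_comp,
      hq.inner_sub_apply_self_apply]
  rw [hsplit, norm_add_add_sq_of_inner_eq_zero (hp.inner_sub_apply_self_apply _ _)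
    (hp.inner_sub_apply_self_apply _ _) hbc]
  have hb := hp.norm_apply_le (x - q x)
  have hc := (hp.norm_apply_le _).trans (hq.norm_apply_le (x - r x))
  gcongr

end StarProjection

section Kronecker

variable {m n R : Type*} [Fintype m] [Fintype n] [CommRing R]

theorem Matrix.isStarProjection_iff_transpose [StarRing R] [TrivialStar R] {P : Matrix n n R} :
    IsStarProjection P ↔ P * P = P ∧ Pᵀ = P := by
  rw [isStarProjection_iff', star_eq_conjTranspose, conjTranspose_eq_transpose_of_trivial]

theorem IsStarProjection.kronecker [StarRing R] {A : Matrix m m R} {B : Matrix n n R}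
    (hA : IsStarProjection A) (hB : IsStarProjection B) : IsStarProjection (A ⊗ₖ B) where
  isIdempotentElem := by
    rw [IsIdempotentElem, ← mul_kronecker_mul, hA.isIdempotentElem.eq, hB.isIdempotentElem.eq]
  isSelfAdjoint := by
    rw [IsSelfAdjoint, star_eq_conjTranspose, conjTranspose_kronecker, ← star_eq_conjTranspose,
      ← star_eq_conjTranspose, hA.isSelfAdjoint.star_eq, hB.isSelfAdjoint.star_eq]

theorem Commute.kronecker {A A' : Matrix m m R} {B B' : Matrix n n R} (hA : Commute A A')
    (hB : Commute B B') : Commute (A ⊗ₖ B) (A' ⊗ₖ B') := by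
  rw [Commute, SemiconjBy, ← mul_kronecker_mul, ← mul_kronecker_mul, hA.eq, hB.eq]

end Kronecker

section Tensor

variable {n₁ n₂ n₃ m : ℕ}

theorem tSq_eq_norm_sq (X : Fin n₁ × Fin n₂ × Fin n₃ → ℝ) :
    tSq X = ‖(WithLp.toLp 2 X : EuclideanSpace ℝ _)‖ ^ 2 := by
  simp [tSq, EuclideanSpace.norm_sq_eq]

theorem mode1_eq_kronecker_mulVec (U : Matrix (Fin m) (Fin n₁) ℝ)
    (X : Fin n₁ × Fin n₂ × Fin n₃ → ℝ) :
    mode1 U X = (U ⊗ₖ (1 : Matrix (Fin n₂ × Fin n₃) (Fin n₂ × Fin n₃) ℝ)) *ᵥ X := by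
  ext ⟨i, j, k⟩
  simp [mode1, mulVec, dotProduct, Fintype.sum_prod_type, one_apply]

theorem mode2_eq_kronecker_mulVec (V : Matrix (Fin m) (Fin n₂) ℝ)
    (X : Fin n₁ × Fin n₂ × Fin n₃ → ℝ) :
    mode2 V X =
      ((1 : Matrix (Fin n₁) (Fin n₁) ℝ) ⊗ₖ (V ⊗ₖ (1 : Matrix (Fin n₃) (Fin n₃) ℝ))) *ᵥ X := by
  ext ⟨i, j, k⟩
  simp [mode2, mulVec, dotProduct, Fintype.sum_prod_type, one_apply]

theorem mode3_eq_kronecker_mulVec (W : Matrix (Fin m) (Fin n₃) ℝ)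
    (X : Fin n₁ × Fin n₂ × Fin n₃ → ℝ) :
    mode3 W X =
      ((1 : Matrix (Fin n₁) (Fin n₁) ℝ) ⊗ₖ ((1 : Matrix (Fin n₂) (Fin n₂) ℝ) ⊗ₖ W)) *ᵥ X := by
  ext ⟨i, j, k⟩
  simp [mode3, mulVec, dotProduct, Fintype.sum_prod_type, one_apply]

end Tensor

theorem stmt6_general {n₁ n₂ n₃ : ℕ} (X : Fin n₁ × Fin n₂ × Fin n₃ → ℝ)
    (Pi1 : Matrix (Fin n₁) (Fin n₁) ℝ) (Pi2 : Matrix (Fin n₂) (Fin n₂) ℝ)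
    (Pi3 : Matrix (Fin n₃) (Fin n₃) ℝ)
    (h1idem : Pi1 * Pi1 = Pi1) (h1sym : Pi1ᵀ = Pi1)
    (h2idem : Pi2 * Pi2 = Pi2) (h2sym : Pi2ᵀ = Pi2) :
    tSq (X - mode3 Pi3 (mode2 Pi2 (mode1 Pi1 X))) ≤
      tSq (X - mode1 Pi1 X) + tSq (X - mode2 Pi2 X) + tSq (X - mode3 Pi3 X) := by
  have hP₁ : IsStarProjection (Pi1 ⊗ₖ (1 : Matrix (Fin n₂ × Fin n₃) _ ℝ)) :=
    (isStarProjection_iff_transpose.2 ⟨h1idem, h1sym⟩).kronecker (.one _)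
  have hP₂ : IsStarProjection
      ((1 : Matrix (Fin n₁) _ ℝ) ⊗ₖ (Pi2 ⊗ₖ (1 : Matrix (Fin n₃) _ ℝ))) :=
    (IsStarProjection.one _).kronecker
      ((isStarProjection_iff_transpose.2 ⟨h2idem, h2sym⟩).kronecker (.one _))
  have h₁₂ : Commute (Pi1 ⊗ₖ 1) (1 ⊗ₖ (Pi2 ⊗ₖ (1 : Matrix (Fin n₃) _ ℝ))) :=
    (Commute.one_right _).kronecker (Commute.one_left _)
  have h₁₃ : Commute (Pi1 ⊗ₖ 1) (1 ⊗ₖ ((1 : Matrix (Fin n₂) _ ℝ) ⊗ₖ Pi3)) :=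
    (Commute.one_right _).kronecker (Commute.one_left _)
  have h₂₃ : Commute ((1 : Matrix (Fin n₁) _ ℝ) ⊗ₖ (Pi2 ⊗ₖ 1)) (1 ⊗ₖ (1 ⊗ₖ Pi3)) :=
    (Commute.one_left 1).kronecker ((Commute.one_right _).kronecker (Commute.one_left _))
  let Φ := toEuclideanCLM (𝕜 := ℝ) (n := Fin n₁ × Fin n₂ × Fin n₃)
  have key := norm_sub_apply_apply_apply_sq_le (hP₁.map Φ) (hP₂.map Φ) (h₁₂.map Φ) (h₁₃.map Φ)
    (h₂₃.map Φ) (WithLp.toLp 2 X)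
  simpa only [Φ, tSq_eq_norm_sq, mode1_eq_kronecker_mulVec, mode2_eq_kronecker_mulVec,
    mode3_eq_kronecker_mulVec, toEuclideanCLM_toLp, ← WithLp.toLp_sub] using key

theorem stmt6 {n₁ n₂ n₃ : ℕ} (X : Fin n₁ × Fin n₂ × Fin n₃ → ℝ)
    (Pi1 : Matrix (Fin n₁) (Fin n₁) ℝ) (Pi2 : Matrix (Fin n₂) (Fin n₂) ℝ)
    (Pi3 : Matrix (Fin n₃) (Fin n₃) ℝ)
    (h1idem : Pi1 * Pi1 = Pi1) (h1sym : Pi1ᵀ = Pi1)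
    (h2idem : Pi2 * Pi2 = Pi2) (h2sym : Pi2ᵀ = Pi2)
    (h3idem : Pi3 * Pi3 = Pi3) (h3sym : Pi3ᵀ = Pi3) :
    tSq (X - mode3 Pi3 (mode2 Pi2 (mode1 Pi1 X))) ≤
      tSq (X - mode1 Pi1 X) + tSq (X - mode2 Pi2 X) + tSq (X - mode3 Pi3 X) :=
  stmt6_general X Pi1 Pi2 Pi3 h1idem h1sym h2idem h2sym
end

section
/- Deterministic core of the hybrid error bound with spectral norms (d = 3, t = 1): under the assumptions of the previous statement, ‖A - Â‖_F² ≤ n₁ ‖E‖₂² + n₂ ‖H₂‖₂² + n₃ ‖H₃‖₂², where ‖·‖₂ denotes the spectral norm of the matrix. -/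
open Matrix

/-!
Each factor of `Â` acts on the corresponding unfolding as an orthogonal projector
`P₁ = C C⁺`, `P₂ = U₂ U₂ᵀ`, `P₃ = U₃ U₃ᵀ`, and the three act on different modes, so
`Â = P₁ P₂ P₃ A`. Since `A - P₁ Y = (A - P₁ A) + P₁ (A - Y)` is an orthogonal sum and `P₁` is a
contraction, `‖A - P₁ P₂ P₃ A‖² ≤ ‖(I - P₁) A₍₁₎‖² + ‖A - P₂ P₃ A‖²`; iterating bounds the error by
the three single-mode errors. `P_k` fixes the low-rank part of `A₍ₖ₎`, so
`(I - P_k) A₍ₖ₎ = (I - P_k) H_k`, whose squared Frobenius norm is at most that of `H_k`, and each of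
the `n_k` rows of `H_k` has Euclidean norm at most `‖H_k‖₂`.
-/

section Frobenius

variable {ι κ : Type*} [Fintype ι] [Fintype κ]

lemma frobSq_nonneg_s13 (M : Matrix ι κ ℝ) : 0 ≤ frobSq M := by
  unfold frobSq; positivity

lemma frobSq_eq_trace (M : Matrix ι κ ℝ) : frobSq M = trace (Mᵀ * M) := by
  unfold frobSq trace
  rw [Finset.sum_comm]
  simp [mul_apply, sq]

lemma IsStarProjection.transpose_eq {P : Matrix ι ι ℝ} (hP : IsStarProjection P) : Pᵀ = P := by
  simpa [star_eq_conjTranspose] using hP.isSelfAdjoint.star_eq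

variable {P : Matrix ι ι ℝ}

lemma IsStarProjection.frobSq_sub_mul_add_mul (hP : IsStarProjection P) (M N : Matrix ι κ ℝ) :
    frobSq (M - P * M + P * N) = frobSq (M - P * M) + frobSq (P * N) := by
  have horth : (M - P * M)ᵀ * (P * N) = 0 := by
    rw [transpose_sub, transpose_mul, hP.transpose_eq, Matrix.sub_mul, Matrix.mul_assoc,
      ← Matrix.mul_assoc P P N, hP.isIdempotentElem.eq, sub_self]
  have horth' : (P * N)ᵀ * (M - P * M) = 0 := by
    simpa [transpose_mul] using congrArg transpose horth
  simp only [frobSq_eq_trace, transpose_add, Matrix.add_mul, Matrix.mul_add, horth, horth',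
    add_zero, zero_add, trace_add]

lemma IsStarProjection.frobSq_eq_add (hP : IsStarProjection P) (N : Matrix ι κ ℝ) :
    frobSq N = frobSq (N - P * N) + frobSq (P * N) := by
  simpa using hP.frobSq_sub_mul_add_mul N N

lemma IsStarProjection.frobSq_mul_le (hP : IsStarProjection P) (N : Matrix ι κ ℝ) :
    frobSq (P * N) ≤ frobSq N := by
  linarith [hP.frobSq_eq_add N, frobSq_nonneg_s13 (N - P * N)]

lemma IsStarProjection.frobSq_sub_mul_le (hP : IsStarProjection P) (N : Matrix ι κ ℝ) :
    frobSq (N - P * N) ≤ frobSq N := by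
  linarith [hP.frobSq_eq_add N, frobSq_nonneg_s13 (P * N)]

lemma IsStarProjection.frobSq_sub_mul_le_add (hP : IsStarProjection P) (M N : Matrix ι κ ℝ) :
    frobSq (M - P * N) ≤ frobSq (M - P * M) + frobSq (M - N) := by
  have hsplit : M - P * N = M - P * M + P * (M - N) := by
    rw [Matrix.mul_sub]; abel
  rw [hsplit, hP.frobSq_sub_mul_add_mul]
  linarith [hP.frobSq_mul_le (M - N)]

end Frobenius

section Spectral

variable {ι κ : Type*} [Fintype ι] [Fintype κ] [DecidableEq ι] [DecidableEq κ]

open scoped Matrix.Norms.L2Operator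

lemma specNorm_eq_l2_opNorm (M : Matrix ι κ ℝ) : specNorm M = ‖M‖ := rfl

lemma sum_sq_row_le_specNorm_sq (M : Matrix ι κ ℝ) (i : ι) :
    ∑ j, M i j ^ 2 ≤ specNorm M ^ 2 := by
  have h := l2_opNorm_mulVec Mᴴ (EuclideanSpace.single i 1)
  rw [l2_opNorm_conjTranspose, PiLp.norm_single, norm_one, mul_one] at h
  have hrow : ‖(EuclideanSpace.equiv κ ℝ).symm (Mᴴ *ᵥ EuclideanSpace.single i 1)‖ ^ 2 =
      ∑ j, M i j ^ 2 := by
    rw [EuclideanSpace.norm_sq_eq]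
    simp
  rw [← hrow, specNorm_eq_l2_opNorm]
  gcongr

lemma frobSq_le_card_mul_specNorm_sq (M : Matrix ι κ ℝ) :
    frobSq M ≤ Fintype.card ι * specNorm M ^ 2 := by
  calc frobSq M ≤ ∑ _i : ι, specNorm M ^ 2 :=
        Finset.sum_le_sum fun i _ => sum_sq_row_le_specNorm_sq M i
    _ = Fintype.card ι * specNorm M ^ 2 := by simp

lemma IsStarProjection.frobSq_sub_mul_le_of_eq_add {P : Matrix ι ι ℝ} (hP : IsStarProjection P)
    {M L H : Matrix ι κ ℝ} (hM : M = L + H) (hL : P * L = L) :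
    frobSq (M - P * M) ≤ Fintype.card ι * specNorm H ^ 2 := by
  have hres : M - P * M = H - P * H := by
    rw [hM, Matrix.mul_add, hL]; abel
  rw [hres]
  exact (hP.frobSq_sub_mul_le H).trans (frobSq_le_card_mul_specNorm_sq H)

end Spectral

section Projectors

variable {ι κ : Type*} [Fintype ι] [Fintype κ] [DecidableEq κ]

lemma isStarProjection_mul_transpose {U : Matrix ι κ ℝ} (hU : Uᵀ * U = 1) :
    IsStarProjection (U * Uᵀ) where
  isIdempotentElem := by
    rw [IsIdempotentElem, Matrix.mul_assoc, ← Matrix.mul_assoc Uᵀ, hU, Matrix.one_mul]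
  isSelfAdjoint := by
    simp [IsSelfAdjoint, star_eq_conjTranspose, transpose_mul]

lemma mul_transpose_mul_eq_self {U : Matrix ι κ ℝ} (hU : Uᵀ * U = 1) {m : Type*}
    (X : Matrix κ m ℝ) : U * Uᵀ * (U * X) = U * X := by
  rw [Matrix.mul_assoc, ← Matrix.mul_assoc Uᵀ, hU, Matrix.one_mul]

lemma isUnit_det_transpose_mul_self_of_rank_eq {m k : ℕ} {C : Matrix (Fin m) (Fin k) ℝ}
    (hC : C.rank = k) : IsUnit (Cᵀ * C).det := by
  have hrange : LinearMap.range (Cᵀ * C).mulVecLin = ⊤ := by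
    apply Submodule.eq_top_of_finrank_eq
    rw [Module.finrank_fin_fun]
    exact (rank_transpose_mul_self C).trans hC
  rw [← isUnit_iff_isUnit_det, ← mulVec_surjective_iff_isUnit]
  simpa only [coe_mulVecLin] using LinearMap.range_eq_top.mp hrange

lemma pinv_mul_self_of_rank_eq {m k : ℕ} {C : Matrix (Fin m) (Fin k) ℝ} (hC : C.rank = k) :
    pinv C * C = 1 := by
  rw [pinv, Matrix.mul_assoc]
  exact nonsing_inv_mul _ (isUnit_det_transpose_mul_self_of_rank_eq hC)

lemma isStarProjection_mul_pinv_of_rank_eq {m k : ℕ} {C : Matrix (Fin m) (Fin k) ℝ}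
    (hC : C.rank = k) : IsStarProjection (C * pinv C) where
  isIdempotentElem := by
    rw [IsIdempotentElem, Matrix.mul_assoc, ← Matrix.mul_assoc (pinv C),
      pinv_mul_self_of_rank_eq hC, Matrix.one_mul]
  isSelfAdjoint := by
    simp [IsSelfAdjoint, star_eq_conjTranspose, pinv, transpose_mul, transpose_nonsing_inv,
      Matrix.mul_assoc]

lemma mul_pinv_mul_eq_self_of_rank_eq {m k : ℕ} {C : Matrix (Fin m) (Fin k) ℝ} (hC : C.rank = k)
    {l : Type*} (X : Matrix (Fin k) l ℝ) : C * pinv C * (C * X) = C * X := by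
  rw [Matrix.mul_assoc, ← Matrix.mul_assoc (pinv C), pinv_mul_self_of_rank_eq hC, Matrix.one_mul]

end Projectors

section Tensor

variable {n₁ n₂ n₃ m : ℕ}

lemma tSq_eq_frobSq_unfold1 (X : Fin n₁ × Fin n₂ × Fin n₃ → ℝ) : tSq X = frobSq (unfold1 X) := by
  simp only [tSq, frobSq, unfold1, of_apply, Fintype.sum_prod_type]

lemma tSq_eq_frobSq_unfold2 (X : Fin n₁ × Fin n₂ × Fin n₃ → ℝ) : tSq X = frobSq (unfold2 X) := by
  simp only [tSq, frobSq, unfold2, of_apply, Fintype.sum_prod_type]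
  exact Finset.sum_comm

lemma tSq_eq_frobSq_unfold3 (X : Fin n₁ × Fin n₂ × Fin n₃ → ℝ) : tSq X = frobSq (unfold3 X) := by
  simp only [tSq, frobSq, unfold3, of_apply, Fintype.sum_prod_type]
  calc _ = ∑ i : Fin n₁, ∑ l : Fin n₃, ∑ j : Fin n₂, X (i, j, l) ^ 2 :=
        Finset.sum_congr rfl fun _ _ => Finset.sum_comm
    _ = _ := Finset.sum_comm

lemma unfold1_sub (X Y : Fin n₁ × Fin n₂ × Fin n₃ → ℝ) :
    unfold1 (X - Y) = unfold1 X - unfold1 Y := rfl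

lemma unfold2_sub (X Y : Fin n₁ × Fin n₂ × Fin n₃ → ℝ) :
    unfold2 (X - Y) = unfold2 X - unfold2 Y := rfl

lemma unfold3_sub (X Y : Fin n₁ × Fin n₂ × Fin n₃ → ℝ) :
    unfold3 (X - Y) = unfold3 X - unfold3 Y := rfl

lemma unfold1_mode1 (M : Matrix (Fin m) (Fin n₁) ℝ) (X : Fin n₁ × Fin n₂ × Fin n₃ → ℝ) :
    unfold1 (mode1 M X) = M * unfold1 X := by
  ext i p
  simp [unfold1, mode1, mul_apply]

lemma unfold2_mode2 (M : Matrix (Fin m) (Fin n₂) ℝ) (X : Fin n₁ × Fin n₂ × Fin n₃ → ℝ) :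
    unfold2 (mode2 M X) = M * unfold2 X := by
  ext k p
  simp [unfold2, mode2, mul_apply]

lemma unfold3_mode3 (M : Matrix (Fin m) (Fin n₃) ℝ) (X : Fin n₁ × Fin n₂ × Fin n₃ → ℝ) :
    unfold3 (mode3 M X) = M * unfold3 X := by
  ext l p
  simp [unfold3, mode3, mul_apply]

variable {k : ℕ}

lemma mode1_mode1 (M : Matrix (Fin k) (Fin m) ℝ) (N : Matrix (Fin m) (Fin n₁) ℝ)
    (X : Fin n₁ × Fin n₂ × Fin n₃ → ℝ) : mode1 M (mode1 N X) = mode1 (M * N) X := by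
  funext p
  simp only [mode1, mul_apply, Finset.mul_sum, Finset.sum_mul, mul_assoc]
  exact Finset.sum_comm

lemma mode2_mode2 (M : Matrix (Fin k) (Fin m) ℝ) (N : Matrix (Fin m) (Fin n₂) ℝ)
    (X : Fin n₁ × Fin n₂ × Fin n₃ → ℝ) : mode2 M (mode2 N X) = mode2 (M * N) X := by
  funext p
  simp only [mode2, mul_apply, Finset.mul_sum, Finset.sum_mul, mul_assoc]
  exact Finset.sum_comm

lemma mode3_mode3 (M : Matrix (Fin k) (Fin m) ℝ) (N : Matrix (Fin m) (Fin n₃) ℝ)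
    (X : Fin n₁ × Fin n₂ × Fin n₃ → ℝ) : mode3 M (mode3 N X) = mode3 (M * N) X := by
  funext p
  simp only [mode3, mul_apply, Finset.mul_sum, Finset.sum_mul, mul_assoc]
  exact Finset.sum_comm

lemma mode2_mode1_comm (M : Matrix (Fin k) (Fin n₂) ℝ) (N : Matrix (Fin m) (Fin n₁) ℝ)
    (X : Fin n₁ × Fin n₂ × Fin n₃ → ℝ) : mode2 M (mode1 N X) = mode1 N (mode2 M X) := by
  funext p
  simp only [mode1, mode2, Finset.mul_sum, mul_left_comm]
  exact Finset.sum_comm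

lemma mode3_mode1_comm (M : Matrix (Fin k) (Fin n₃) ℝ) (N : Matrix (Fin m) (Fin n₁) ℝ)
    (X : Fin n₁ × Fin n₂ × Fin n₃ → ℝ) : mode3 M (mode1 N X) = mode1 N (mode3 M X) := by
  funext p
  simp only [mode1, mode3, Finset.mul_sum, mul_left_comm]
  exact Finset.sum_comm

lemma mode3_mode2_comm (M : Matrix (Fin k) (Fin n₃) ℝ) (N : Matrix (Fin m) (Fin n₂) ℝ)
    (X : Fin n₁ × Fin n₂ × Fin n₃ → ℝ) : mode3 M (mode2 N X) = mode2 N (mode3 M X) := by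
  funext p
  simp only [mode2, mode3, Finset.mul_sum, mul_left_comm]
  exact Finset.sum_comm

lemma mode3_mode2_mode1_mode3_mode2_mode1 {r₁ r₂ r₃ : ℕ}
    (M₁ : Matrix (Fin n₁) (Fin r₁) ℝ) (N₁ : Matrix (Fin r₁) (Fin n₁) ℝ)
    (M₂ : Matrix (Fin n₂) (Fin r₂) ℝ) (N₂ : Matrix (Fin r₂) (Fin n₂) ℝ)
    (M₃ : Matrix (Fin n₃) (Fin r₃) ℝ) (N₃ : Matrix (Fin r₃) (Fin n₃) ℝ)
    (X : Fin n₁ × Fin n₂ × Fin n₃ → ℝ) :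
    mode3 M₃ (mode2 M₂ (mode1 M₁ (mode3 N₃ (mode2 N₂ (mode1 N₁ X))))) =
      mode1 (M₁ * N₁) (mode2 (M₂ * N₂) (mode3 (M₃ * N₃) X)) := by
  simp only [mode2_mode1_comm, mode3_mode1_comm, mode3_mode2_comm, mode1_mode1, mode2_mode2,
    mode3_mode3]

lemma IsStarProjection.tSq_sub_mode1_le {P : Matrix (Fin n₁) (Fin n₁) ℝ} (hP : IsStarProjection P)
    (X Y : Fin n₁ × Fin n₂ × Fin n₃ → ℝ) :
    tSq (X - mode1 P Y) ≤ frobSq (unfold1 X - P * unfold1 X) + tSq (X - Y) := by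
  rw [tSq_eq_frobSq_unfold1, tSq_eq_frobSq_unfold1, unfold1_sub, unfold1_sub, unfold1_mode1]
  exact hP.frobSq_sub_mul_le_add _ _

lemma IsStarProjection.tSq_sub_mode2_le {P : Matrix (Fin n₂) (Fin n₂) ℝ} (hP : IsStarProjection P)
    (X Y : Fin n₁ × Fin n₂ × Fin n₃ → ℝ) :
    tSq (X - mode2 P Y) ≤ frobSq (unfold2 X - P * unfold2 X) + tSq (X - Y) := by
  rw [tSq_eq_frobSq_unfold2, tSq_eq_frobSq_unfold2, unfold2_sub, unfold2_sub, unfold2_mode2]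
  exact hP.frobSq_sub_mul_le_add _ _

lemma tSq_sub_mode3 (P : Matrix (Fin n₃) (Fin n₃) ℝ) (X : Fin n₁ × Fin n₂ × Fin n₃ → ℝ) :
    tSq (X - mode3 P X) = frobSq (unfold3 X - P * unfold3 X) := by
  rw [tSq_eq_frobSq_unfold3, unfold3_sub, unfold3_mode3]

end Tensor

theorem stmt13_general {n₁ n₂ n₃ r₁ r₂ r₃ : ℕ} (A : Fin n₁ × Fin n₂ × Fin n₃ → ℝ)
    (C : Matrix (Fin n₁) (Fin r₁) ℝ) (B : Matrix (Fin r₁) (Fin n₂ × Fin n₃) ℝ)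
    (E : Matrix (Fin n₁) (Fin n₂ × Fin n₃) ℝ)
    (U₂ : Matrix (Fin n₂) (Fin r₂) ℝ) (S₂ : Matrix (Fin r₂) (Fin r₂) ℝ)
    (V₂ : Matrix (Fin n₁ × Fin n₃) (Fin r₂) ℝ) (H₂ : Matrix (Fin n₂) (Fin n₁ × Fin n₃) ℝ)
    (U₃ : Matrix (Fin n₃) (Fin r₃) ℝ) (S₃ : Matrix (Fin r₃) (Fin r₃) ℝ)
    (V₃ : Matrix (Fin n₁ × Fin n₂) (Fin r₃) ℝ) (H₃ : Matrix (Fin n₃) (Fin n₁ × Fin n₂) ℝ)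
    (hrank : C.rank = r₁) (hA1 : unfold1 A = C * B + E)
    (hU₂ : U₂ᵀ * U₂ = 1) (hA2 : unfold2 A = U₂ * S₂ * V₂ᵀ + H₂)
    (hU₃ : U₃ᵀ * U₃ = 1) (hA3 : unfold3 A = U₃ * S₃ * V₃ᵀ + H₃) :
    tSq (A - mode3 U₃ (mode2 U₂ (mode1 C
        (mode3 U₃ᵀ (mode2 U₂ᵀ (mode1 (pinv C) A)))))) ≤
      (n₁ : ℝ) * specNorm E ^ 2 + (n₂ : ℝ) * specNorm H₂ ^ 2 + (n₃ : ℝ) * specNorm H₃ ^ 2 := by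
  have hP₁ := isStarProjection_mul_pinv_of_rank_eq hrank
  have hP₂ := isStarProjection_mul_transpose hU₂
  have hP₃ := isStarProjection_mul_transpose hU₃
  have h₁ := hP₁.frobSq_sub_mul_le_of_eq_add hA1 (mul_pinv_mul_eq_self_of_rank_eq hrank B)
  have h₂ := hP₂.frobSq_sub_mul_le_of_eq_add hA2
    (by rw [Matrix.mul_assoc U₂ S₂]; exact mul_transpose_mul_eq_self hU₂ _)
  have h₃ := hP₃.frobSq_sub_mul_le_of_eq_add hA3
    (by rw [Matrix.mul_assoc U₃ S₃]; exact mul_transpose_mul_eq_self hU₃ _)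
  simp only [Fintype.card_fin] at h₁ h₂ h₃
  rw [mode3_mode2_mode1_mode3_mode2_mode1]
  linarith [hP₁.tSq_sub_mode1_le A (mode2 (U₂ * U₂ᵀ) (mode3 (U₃ * U₃ᵀ) A)),
    hP₂.tSq_sub_mode2_le A (mode3 (U₃ * U₃ᵀ) A), tSq_sub_mode3 (U₃ * U₃ᵀ) A]

theorem stmt13 {n₁ n₂ n₃ r₁ r₂ r₃ : ℕ} (A : Fin n₁ × Fin n₂ × Fin n₃ → ℝ)
    (C : Matrix (Fin n₁) (Fin r₁) ℝ) (B : Matrix (Fin r₁) (Fin n₂ × Fin n₃) ℝ)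
    (E : Matrix (Fin n₁) (Fin n₂ × Fin n₃) ℝ)
    (U₂ : Matrix (Fin n₂) (Fin r₂) ℝ) (S₂ : Matrix (Fin r₂) (Fin r₂) ℝ)
    (V₂ : Matrix (Fin n₁ × Fin n₃) (Fin r₂) ℝ) (H₂ : Matrix (Fin n₂) (Fin n₁ × Fin n₃) ℝ)
    (U₃ : Matrix (Fin n₃) (Fin r₃) ℝ) (S₃ : Matrix (Fin r₃) (Fin r₃) ℝ)
    (V₃ : Matrix (Fin n₁ × Fin n₂) (Fin r₃) ℝ) (H₃ : Matrix (Fin n₃) (Fin n₁ × Fin n₂) ℝ)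
    (hrank : C.rank = r₁) (hA1 : unfold1 A = C * B + E)
    (hU₂ : U₂ᵀ * U₂ = 1) (hV₂ : V₂ᵀ * V₂ = 1) (hA2 : unfold2 A = U₂ * S₂ * V₂ᵀ + H₂)
    (hU₃ : U₃ᵀ * U₃ = 1) (hV₃ : V₃ᵀ * V₃ = 1) (hA3 : unfold3 A = U₃ * S₃ * V₃ᵀ + H₃) :
    tSq (A - mode3 U₃ (mode2 U₂ (mode1 C
        (mode3 U₃ᵀ (mode2 U₂ᵀ (mode1 (pinv C) A)))))) ≤
      (n₁ : ℝ) * specNorm E ^ 2 + (n₂ : ℝ) * specNorm H₂ ^ 2 + (n₃ : ℝ) * specNorm H₃ ^ 2 :=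
  stmt13_general A C B E U₂ S₂ V₂ H₂ U₃ S₃ V₃ H₃ hrank hA1 hU₂ hA2 hU₃ hA3
end
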